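/- arXiv:1903.04139 — 2 statements merged into one kernel-verified Lean document; each statement's English description precedes it below -/
import Mathlib

section
/- Let G be a finite non-abelian p-group such that Aut_l(G) = Inn(G). Then G is nilpotent of class 2 and exp(G/Z(G)) ≤ exp(L(G)). -/
/-- The absolute centre `L(G)`: elements fixed by every automorphism of `G`. -/
def absoluteCenter (G : Type*) [Group G] : Subgroup G where
  carrier := {g | ∀ α : MulAut G, α g = g}
  one_mem' := fun α => map_one α
  mul_mem' := fun {a b} ha hb α => by rw [map_mul, ha α, hb α]
  inv_mem' := fun {a} ha α => by rw [map_inv, ha α]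

/-- The group `Aut_l(G)` of absolute central automorphisms of `G`. -/
def absCentralAut (G : Type*) [Group G] : Subgroup (MulAut G) where
  carrier := {α | ∀ g : G, g⁻¹ * α g ∈ absoluteCenter G}
  one_mem' := fun g => by simpa using (absoluteCenter G).one_mem
  mul_mem' := fun {α β} hα hβ g => by
    have h : g⁻¹ * (α * β) g = (g⁻¹ * β g) * ((β g)⁻¹ * α (β g)) := by
      simp [MulAut.mul_apply, mul_assoc]
    rw [h]; exact mul_mem (hβ g) (hα (β g))
  inv_mem' := fun {α} hα g => by
    have h : g⁻¹ * α⁻¹ g = ((α⁻¹ g)⁻¹ * α (α⁻¹ g))⁻¹ := by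
      simp [MulAut.inv_def, mul_assoc]
    rw [h]; exact inv_mem (hα (α⁻¹ g))

/-!
If every inner automorphism is absolute central, then every commutator lies in `L(G)`, which is
fixed by all inner automorphisms and hence central. So `G` has class at most `2`, and in class `2`
the map `x ↦ ⁅y, x⁆` is a homomorphism; thus `⁅y, x ^ n⁆ = ⁅y, x⁆ ^ n = 1` for `n = exp(L(G))`,
i.e. `x ^ n` is central.
-/

open scoped commutatorElement

section

variable {G : Type*} [Group G]

theorem absoluteCenter_le_center : absoluteCenter G ≤ Subgroup.center G := fun c hc =>
  Subgroup.mem_center_iff.mpr fun x => by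
    simpa [mul_inv_eq_iff_eq_mul] using hc (MulAut.conj x)

theorem commutatorElement_mem_absoluteCenter
    (h : (MulAut.conj : G →* MulAut G).range ≤ absCentralAut G) (x y : G) :
    ⁅x, y⁆ ∈ absoluteCenter G := by
  simpa [commutatorElement_def, mul_assoc] using h ⟨y, rfl⟩ x⁻¹

theorem upperCentralSeries_two_eq_top_of_commutatorElement_mem_center
    (h : ∀ x y : G, ⁅x, y⁆ ∈ Subgroup.center G) : Subgroup.upperCentralSeries G 2 = ⊤ :=
  eq_top_iff.mpr fun x _ => Subgroup.mem_upperCentralSeries_succ_iff.mpr fun y => by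
    simpa only [Subgroup.upperCentralSeries_one] using h x y

theorem center_ne_top_of_exists_mul_ne (h : ∃ a b : G, a * b ≠ b * a) :
    Subgroup.center G ≠ ⊤ := fun htop => by
  obtain ⟨a, b, hab⟩ := h
  exact hab (Subgroup.mem_center_iff.mp (htop ▸ Subgroup.mem_top b) a)

theorem commutatorElement_pow_right_of_commute {x y : G} (h : Commute ⁅y, x⁆ x) (n : ℕ) :
    ⁅y, x ^ n⁆ = ⁅y, x⁆ ^ n := by
  have hconj : y * x * y⁻¹ = ⁅y, x⁆ * x := by group
  rw [commutatorElement_def, ← conj_pow, hconj, h.mul_pow, mul_inv_cancel_right]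

theorem pow_exponent_mem_center_of_commutatorElement_mem {H : Subgroup G}
    (hH : H ≤ Subgroup.center G) (hcomm : ∀ x y : G, ⁅x, y⁆ ∈ H) (x : G) :
    x ^ Monoid.exponent H ∈ Subgroup.center G := by
  refine Subgroup.mem_center_iff.mpr fun y => ?_
  have hyx : Commute ⁅y, x⁆ x := (Subgroup.mem_center_iff.mp (hH (hcomm y x)) x).symm
  rw [← commutatorElement_eq_one_iff_mul_comm, commutatorElement_pow_right_of_commute hyx]
  exact congrArg Subtype.val (Monoid.pow_exponent_eq_one (⟨_, hcomm y x⟩ : H))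

theorem exponent_quotient_center_dvd_of_commutatorElement_mem {H : Subgroup G}
    (hH : H ≤ Subgroup.center G) (hcomm : ∀ x y : G, ⁅x, y⁆ ∈ H) :
    Monoid.exponent (G ⧸ Subgroup.center G) ∣ Monoid.exponent H :=
  Monoid.exponent_dvd_of_forall_pow_eq_one fun q => by
    obtain ⟨x, rfl⟩ := QuotientGroup.mk_surjective q
    rw [← QuotientGroup.mk_pow, QuotientGroup.eq_one_iff]
    exact pow_exponent_mem_center_of_commutatorElement_mem hH hcomm x

end

theorem class_two_and_exponent_le_general (G : Type*) [Group G] [Finite G]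
    (hna : ∃ a b : G, a * b ≠ b * a)
    (h : absCentralAut G = (MulAut.conj : G →* MulAut G).range) :
    (upperCentralSeries G 2 = ⊤ ∧ upperCentralSeries G 1 ≠ ⊤) ∧
      Monoid.exponent (G ⧸ Subgroup.center G) ≤ Monoid.exponent (absoluteCenter G) := by
  have hcomm := commutatorElement_mem_absoluteCenter h.ge
  refine ⟨⟨?_, ?_⟩, ?_⟩
  · exact upperCentralSeries_two_eq_top_of_commutatorElement_mem_center
      fun x y => absoluteCenter_le_center (hcomm x y)
  · exact (Subgroup.upperCentralSeries_one G).trans_ne (center_ne_top_of_exists_mul_ne hna)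
  · exact Nat.le_of_dvd (Monoid.exponent_pos.mpr Monoid.ExponentExists.of_finite)
      (exponent_quotient_center_dvd_of_commutatorElement_mem absoluteCenter_le_center hcomm)

/-- Let `G` be a finite non-abelian `p`-group with `Aut_l(G) = Inn(G)`.
Then `G` is nilpotent of class `2` and `exp(G/Z(G)) ≤ exp(L(G))`. -/
theorem class_two_and_exponent_le {p : ℕ} [Fact p.Prime] (G : Type*) [Group G] [Finite G]
    (hG : IsPGroup p G) (hna : ∃ a b : G, a * b ≠ b * a)
    (h : absCentralAut G = (MulAut.conj : G →* MulAut G).range) :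
    (upperCentralSeries G 2 = ⊤ ∧ upperCentralSeries G 1 ≠ ⊤) ∧
      Monoid.exponent (G ⧸ Subgroup.center G) ≤ Monoid.exponent (absoluteCenter G) :=
  class_two_and_exponent_le_general G hna h
end

section
/- Let G be a finite non-abelian p-group with Aut_l(G) = Inn(G), and let p^n = exp(L(G)). Then the subgroup G^{p^n} generated by all p^n-th powers of elements of G is contained in Z(G), and hence L(G)·G^{p^n} ≤ Z(G). -/
/-- The subgroup `G^m` generated by all `m`-th powers of elements of `G`. -/
def powSubgroup (G : Type*) [Group G] (m : ℕ) : Subgroup G :=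
  Subgroup.closure {x : G | ∃ g : G, g ^ m = x}

lemma absCenter_le_center' (G : Type*) [Group G] :
    absoluteCenter G ≤ Subgroup.center G := by
  intro g hg
  rw [Subgroup.mem_center_iff]
  intro x
  have hx := hg (MulAut.conj x)
  simp only [MulAut.conj_apply] at hx
  calc x * g = (x * g * x⁻¹) * x := by group
    _ = g * x := by rw [hx]

/-- Let `G` be a finite non-abelian `p`-group with `Aut_l(G) = Inn(G)` and let
`p ^ n = exp(L(G))`.  Then `G ^ (p ^ n) ≤ Z(G)`, and hence
`L(G) * G ^ (p ^ n) ≤ Z(G)`. -/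
theorem pow_le_center {p : ℕ} [Fact p.Prime] (G : Type*) [Group G] [Finite G]
    (hG : IsPGroup p G) (hna : ∃ a b : G, a * b ≠ b * a)
    (h : absCentralAut G = (MulAut.conj : G →* MulAut G).range)
    (n : ℕ) (hn : Monoid.exponent (absoluteCenter G) = p ^ n) :
    powSubgroup G (p ^ n) ≤ Subgroup.center G ∧
      absoluteCenter G ⊔ powSubgroup G (p ^ n) ≤ Subgroup.center G := by
  have hL : absoluteCenter G ≤ Subgroup.center G := absCenter_le_center' G
  have key : ∀ x : G, x ^ (p ^ n) ∈ Subgroup.center G := by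
    intro x
    rw [Subgroup.mem_center_iff]
    intro g
    have hconj : MulAut.conj g ∈ absCentralAut G := by
      rw [h]; exact ⟨g, rfl⟩
    have hc : x⁻¹ * (g * x * g⁻¹) ∈ absoluteCenter G := by
      have := hconj x
      simpa [MulAut.conj_apply, mul_assoc] using this
    set c : G := x⁻¹ * (g * x * g⁻¹) with hcdef
    have hcomm : ∀ y : G, y * c = c * y := fun y =>
      Subgroup.mem_center_iff.mp (hL hc) y
    have hcommpow : ∀ (k : ℕ) (y : G), y * c ^ k = c ^ k * y := fun k y =>
      Subgroup.mem_center_iff.mp (hL (pow_mem hc k)) y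
    have hpow : ∀ k : ℕ, g * x ^ k * g⁻¹ = x ^ k * c ^ k := by
      intro k
      induction k with
      | zero => simp
      | succ k ih =>
        have h1 : g * x * g⁻¹ = x * c := by rw [hcdef]; group
        calc g * x ^ (k + 1) * g⁻¹
            = (g * x ^ k * g⁻¹) * (g * x * g⁻¹) := by group
          _ = (x ^ k * c ^ k) * (x * c) := by rw [ih, h1]
          _ = x ^ k * (c ^ k * x) * c := by group
          _ = x ^ k * (x * c ^ k) * c := by rw [hcommpow k x]
          _ = x ^ (k + 1) * c ^ (k + 1) := by group
    have hcone : c ^ (p ^ n) = 1 := by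
      have : (⟨c, hc⟩ : absoluteCenter G) ^ (p ^ n) = 1 := by
        rw [← hn]; exact Monoid.pow_exponent_eq_one _
      have := congrArg (Subtype.val) this
      simpa using this
    have := hpow (p ^ n)
    rw [hcone, mul_one] at this
    calc g * x ^ (p ^ n) = (g * x ^ (p ^ n) * g⁻¹) * g := by group
      _ = x ^ (p ^ n) * g := by rw [this]
  have h1 : powSubgroup G (p ^ n) ≤ Subgroup.center G := by
    rw [powSubgroup, Subgroup.closure_le]
    rintro y ⟨g, rfl⟩
    exact key g
  exact ⟨h1, sup_le hL h1⟩
end
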